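/- If θ̂ maximizes a concave differentiable function L̂ over the nonnegative orthant, θ* ≥ 0 has support exactly 𝒱 (θ*_j = 0 for j ∉ 𝒱), |∇_j L̂(θ*)| < a for all j ∈ 𝒱, ∇_j L̂(θ*) < -b for all j ∉ 𝒱 with b > 0, ‖θ̂_𝒱‖_∞ ≤ M and ‖θ*_𝒱‖_∞ ≤ M', and |𝒱| = d, then b·‖θ̂_{𝒱^c}‖_1 ≤ a·d·(M + M'), i.e., ∑_{j∉𝒱} θ̂_j ≤ (a·d/b)·(M + M'). -/

import Mathlib

/-- **Bound on the total non-neighbor parameter mass of the constrained maximizer.**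
Let `L̂ : ℝ^S → ℝ` be concave on the nonnegative orthant and differentiable at `θ*`,
let `θ̂` maximize `L̂` over the orthant, and let `θ* ≥ 0` be supported on `𝒱` (i.e.
`θ*_j = 0` for `j ∉ 𝒱`) with `|𝒱| = d`.  If `|∇_j L̂(θ*)| < a` for `j ∈ 𝒱`,
`∇_j L̂(θ*) < -b` for `j ∉ 𝒱` with `b > 0`, `‖θ̂_𝒱‖_∞ ≤ M` and `‖θ*_𝒱‖_∞ ≤ M'`, then
`∑_{j ∉ 𝒱} θ̂_j ≤ (a·d/b)·(M + M')`. -/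
theorem nonneighbor_mass_bound {S : Type*} [Fintype S] [DecidableEq S]
    (Lhat : (S → ℝ) → ℝ) (θhat θstar : S → ℝ) (𝒱 : Finset S)
    (a b M M' : ℝ) (d : ℕ)
    (hconc : ConcaveOn ℝ {θ : S → ℝ | ∀ j, 0 ≤ θ j} Lhat)
    (hdiff : DifferentiableAt ℝ Lhat θstar)
    (hθhat0 : ∀ j, 0 ≤ θhat j)
    (hmax : ∀ θ : S → ℝ, (∀ j, 0 ≤ θ j) → Lhat θ ≤ Lhat θhat)
    (hθstar0 : ∀ j, 0 ≤ θstar j)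
    (hsupp : ∀ j ∉ 𝒱, θstar j = 0)
    (hcard : 𝒱.card = d)
    (hb : 0 < b)
    (hgrad𝒱 : ∀ j ∈ 𝒱, |fderiv ℝ Lhat θstar (Pi.single j 1)| < a)
    (hgradc : ∀ j ∉ 𝒱, fderiv ℝ Lhat θstar (Pi.single j 1) < -b)
    (hMhat : ∀ j ∈ 𝒱, θhat j ≤ M)
    (hMstar : ∀ j ∈ 𝒱, θstar j ≤ M') :
    ∑ j ∈ 𝒱ᶜ, θhat j ≤ a * d / b * (M + M') := by

  classical
  set g : S → ℝ := fun j => fderiv ℝ Lhat θstar (Pi.single j 1) with hg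
  set v : S → ℝ := fun j => θhat j - θstar j with hv
  -- the derivative of t ↦ Lhat (θstar + t • v) at 0
  set D : ℝ := fderiv ℝ Lhat θstar v with hD
  have hmemstar : θstar ∈ {θ : S → ℝ | ∀ j, 0 ≤ θ j} := hθstar0
  have hmemhat : θhat ∈ {θ : S → ℝ | ∀ j, 0 ≤ θ j} := hθhat0
  -- Step 1: subgradient inequality  Lhat θhat - Lhat θstar ≤ D
  have hsub : Lhat θhat - Lhat θstar ≤ D := by
    set φ : ℝ → ℝ := fun t => Lhat (θstar + t • v) with hφ
    have hder : HasDerivAt φ D 0 := by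
      have hc : HasDerivAt (fun t : ℝ => θstar + t • v) v 0 := by
        simpa using ((hasDerivAt_id (0:ℝ)).smul_const v).const_add θstar
      have hf : HasFDerivAt Lhat (fderiv ℝ Lhat θstar) ((fun t : ℝ => θstar + t • v) 0) := by
        simpa using hdiff.hasFDerivAt
      exact hf.comp_hasDerivAt 0 hc
    have hslope : ∀ t ∈ Set.Ioc (0:ℝ) 1, Lhat θhat - Lhat θstar ≤ (φ t - φ 0) / t := by
      intro t ht
      have ht0 : 0 < t := ht.1
      have hcomb : θstar + t • v = (1 - t) • θstar + t • θhat := by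
        ext j; simp [hv]; ring
      have := hconc.2 hmemstar hmemhat (by linarith [ht.2] : (0:ℝ) ≤ 1 - t)
        (le_of_lt ht0) (by ring)
      rw [le_div_iff₀ ht0]
      have hφ0 : φ 0 = Lhat θstar := by simp [hφ]
      have hφt : (1 - t) * Lhat θstar + t * Lhat θhat ≤ φ t := by
        simpa [hφ, hcomb, smul_eq_mul] using this
      nlinarith
    have htend : Filter.Tendsto (fun t => (φ t - φ 0) / t) (nhdsWithin 0 (Set.Ioi 0)) (nhds D) := by
      have h1 := hasDerivAt_iff_tendsto_slope.1 hder
      have h2 : nhdsWithin (0:ℝ) (Set.Ioi 0) ≤ nhdsWithin 0 {0}ᶜ :=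
        nhdsWithin_mono _ (fun x hx => ne_of_gt hx)
      have := h1.mono_left h2
      refine this.congr' ?_
      filter_upwards [self_mem_nhdsWithin] with t ht
      simp [slope_def_field, div_eq_inv_mul]
    refine ge_of_tendsto htend ?_
    filter_upwards [Ioc_mem_nhdsGT_of_mem (by norm_num : (0:ℝ) ∈ Set.Ico (0:ℝ) 1)] with t ht
    exact hslope t ht
  -- Step 2: 0 ≤ D
  have hD0 : 0 ≤ D := le_trans (by linarith [hmax θstar hθstar0]) hsub
  -- Step 3: expand D as a sum
  have hDsum : D = ∑ j, v j * g j := by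
    rw [hD]
    conv_lhs => rw [pi_eq_sum_univ v]
    rw [map_sum]
    refine Finset.sum_congr rfl fun j _ => ?_
    rw [map_smul]
    congr 2
    ext i; simp [Pi.single_apply, eq_comm]
  have hsplit : D = ∑ j ∈ 𝒱, v j * g j + ∑ j ∈ 𝒱ᶜ, θhat j * g j := by
    rw [hDsum, ← Finset.sum_add_sum_compl 𝒱]
    congr 1
    refine Finset.sum_congr rfl fun j hj => ?_
    rw [hv]; simp [hsupp j (Finset.mem_compl.1 hj)]
  -- Step 4: bound the 𝒱 part
  have h𝒱 : ∑ j ∈ 𝒱, v j * g j ≤ a * d * (M + M') := by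
    calc ∑ j ∈ 𝒱, v j * g j ≤ ∑ j ∈ 𝒱, a * (M + M') := by
          refine Finset.sum_le_sum fun j hj => ?_
          have h1 : |g j| < a := hgrad𝒱 j hj
          have h2 : |v j| ≤ M + M' := by
            rw [hv]
            have := hθhat0 j; have := hθstar0 j
            have := hMhat j hj; have := hMstar j hj
            rw [abs_le]; dsimp only; constructor <;> nlinarith
          calc v j * g j ≤ |v j * g j| := le_abs_self _
            _ = |v j| * |g j| := abs_mul _ _
            _ ≤ (M + M') * a := by
                apply mul_le_mul h2 (le_of_lt h1) (abs_nonneg _)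
                have := abs_nonneg (v j); linarith
            _ = a * (M + M') := by ring
      _ = a * d * (M + M') := by rw [Finset.sum_const, hcard]; ring
  -- Step 5: bound the complement part
  have hc : b * ∑ j ∈ 𝒱ᶜ, θhat j ≤ - ∑ j ∈ 𝒱ᶜ, θhat j * g j := by
    rw [Finset.mul_sum, ← Finset.sum_neg_distrib]
    refine Finset.sum_le_sum fun j hj => ?_
    have h1 : g j < -b := hgradc j (Finset.mem_compl.1 hj)
    have h2 : 0 ≤ θhat j := hθhat0 j
    nlinarith
  -- Combine
  have hfinal : b * ∑ j ∈ 𝒱ᶜ, θhat j ≤ a * d * (M + M') := by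
    have := hsplit ▸ hD0
    linarith
  rw [div_mul_eq_mul_div, le_div_iff₀ hb]
  linarith
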